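/- arXiv:quant-ph/0605235 — 7 statements merged into one kernel-verified Lean document; each statement's English description precedes it below -/
import Mathlib

section
/- Let n be a positive integer and let α_1, …, α_n ∈ [0,1]. Define F(ρ) = Σ_{r,s=1}^n ((1−α_r)α_s + (1−α_s)α_r)² ρ_r ρ_s for probability vectors ρ ∈ ℝ^n (ρ_r ≥ 0, Σ_r ρ_r = 1). Then for every probability vector ρ there exists a probability vector ρ' with at most two nonzero entries such that F(ρ') ≥ F(ρ). In particular, the maximum of F over probability vectors is attained at a vector supported on at most two indices. -/
open Finset Function

/-!
Write `mₖ(ρ) = ∑ r, α r ^ k * ρ r`; then `F = 2 m₀ m₂ + 4 m₂² + 2 m₁² - 8 m₁ m₂`. Along a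
direction `d` with `m₀(d) = m₁(d) = 0` the moments `m₀, m₁` are constant and `m₂` is affine, so
`t ↦ F (ρ + t • d)` is a quadratic with leading coefficient `4 m₂(d)² ≥ 0`, hence convex.
If `ρ` has at least three nonzero entries, such a `d ≠ 0` supported in the support of `ρ` exists
(two linear constraints, three unknowns). Moving from `ρ` along `d` and along `-d` until a
coordinate vanishes gives two probability vectors of smaller support, and by convexity `F` does
not decrease at one of them. Induction on the size of the support concludes.
-/

theorem convexOn_univ_quadratic (a b : ℝ) {c : ℝ} (hc : 0 ≤ c) :
    ConvexOn ℝ Set.univ fun t : ℝ => a + b * t + c * t ^ 2 := by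
  refine ⟨convex_univ, fun x _ y _ p q hp hq hpq => ?_⟩
  obtain rfl : q = 1 - p := by linarith
  simp only [smul_eq_mul]
  nlinarith [mul_nonneg (mul_nonneg (mul_nonneg hp hq) hc) (sq_nonneg (x - y))]

theorem Set.Finite.exists_subset_pair_of_ncard_le_two {α : Type*} {s : Set α} (hs : s.Finite)
    (hne : s.Nonempty) (h2 : s.ncard ≤ 2) : ∃ i j, s ⊆ {i, j} := by
  interval_cases h : s.ncard
  · exact absurd ((Set.ncard_eq_zero hs).mp h) hne.ne_empty
  · obtain ⟨i, rfl⟩ := Set.ncard_eq_one.mp h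
    exact ⟨i, i, by simp⟩
  · obtain ⟨i, j, -, rfl⟩ := Set.ncard_eq_two.mp h
    exact ⟨i, j, subset_rfl⟩

section
variable {ι : Type*} [Fintype ι]

theorem exists_neg_of_sum_eq_zero {d : ι → ℝ} (hd : ∑ i, d i = 0) (hd₀ : d ≠ 0) :
    ∃ i, d i < 0 := by
  by_contra! h
  exact hd₀ (funext fun i => (sum_eq_zero_iff_of_nonneg fun j _ => h j).mp hd i (mem_univ i))

theorem exists_nonneg_add_smul_support_ssubset {ρ d : ι → ℝ} (hρ : 0 ≤ ρ)
    (hd : ∑ i, d i = 0) (hd₀ : d ≠ 0) (hdρ : support d ⊆ support ρ) :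
    ∃ t : ℝ, 0 ≤ t ∧ 0 ≤ ρ + t • d ∧ support (ρ + t • d) ⊂ support ρ := by
  obtain ⟨i, hi⟩ := exists_neg_of_sum_eq_zero hd hd₀
  -- `t` is the largest time for which `ρ + t • d` stays nonnegative
  obtain ⟨i₀, hi₀, hmin⟩ := exists_min_image {i | d i < 0} (fun i => ρ i / -d i) ⟨i, by simpa⟩
  replace hi₀ : d i₀ < 0 := by simpa using hi₀
  set t := ρ i₀ / -d i₀
  have hnonneg : 0 ≤ ρ + t • d := by
    intro i
    rcases lt_or_ge (d i) 0 with hi | hi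
    · have := (le_div_iff₀ (neg_pos.mpr hi)).mp (hmin i (by simpa))
      simp only [Pi.add_apply, Pi.smul_apply, smul_eq_mul, Pi.zero_apply]
      linarith
    · exact add_nonneg (hρ i) (mul_nonneg (div_nonneg (hρ i₀) (by linarith)) hi)
  refine ⟨t, div_nonneg (hρ i₀) (by linarith), hnonneg, ?_⟩
  refine (Set.ssubset_iff_of_subset ?_).mpr ⟨i₀, hdρ hi₀.ne, ?_⟩
  · exact (support_add _ _).trans (Set.union_subset subset_rfl
      ((support_smul_subset_right _ _).trans hdρ))
  · simp [t, div_neg, div_mul_cancel₀ _ hi₀.ne]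

theorem exists_ne_zero_support_subset_ker {E : Type*} [AddCommGroup E] [Module ℝ E]
    [FiniteDimensional ℝ E] (L : (ι → ℝ) →ₗ[ℝ] E) {s : Set ι} (hs : Module.finrank ℝ E < s.ncard) :
    ∃ d : ι → ℝ, d ≠ 0 ∧ support d ⊆ s ∧ L d = 0 := by
  classical
  let extendByZero : (s → ℝ) →ₗ[ℝ] ι → ℝ :=
    LinearMap.pi fun i => if h : i ∈ s then LinearMap.proj ⟨i, h⟩ else 0
  have hdim : Module.finrank ℝ E < Module.finrank ℝ (s → ℝ) := by
    rwa [Module.finrank_fintype_fun_eq_card, ← Nat.card_eq_fintype_card, Nat.card_coe_set_eq]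
  obtain ⟨v, hv, hv₀⟩ := Submodule.exists_mem_ne_zero_of_ne_bot
    (LinearMap.ker_ne_bot_of_finrank_lt (f := L ∘ₗ extendByZero) hdim)
  refine ⟨extendByZero v, fun h => hv₀ (funext fun i => ?_), fun i hi => ?_, hv⟩
  · simpa [extendByZero] using congrFun h i
  · by_contra his
    simp [extendByZero, his] at hi

theorem exists_support_ssubset_le_of_convexOn {f : (ι → ℝ) → ℝ} {ρ d : ι → ℝ} (hρ : 0 ≤ ρ)
    (hd : ∑ i, d i = 0) (hd₀ : d ≠ 0) (hdρ : support d ⊆ support ρ)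
    (hf : ConvexOn ℝ Set.univ fun t : ℝ => f (ρ + t • d)) :
    ∃ ρ' : ι → ℝ, 0 ≤ ρ' ∧ ∑ i, ρ' i = ∑ i, ρ i ∧ support ρ' ⊂ support ρ ∧ f ρ ≤ f ρ' := by
  have hsum_add : ∀ (t : ℝ) (e : ι → ℝ), ∑ i, e i = 0 → ∑ i, (ρ + t • e) i = ∑ i, ρ i := by
    intro t e he
    simp [sum_add_distrib, ← mul_sum, he]
  have hd' : ∑ i, (-d) i = 0 := by simp [hd]
  obtain ⟨a, ha, hρa, hsuppa⟩ := exists_nonneg_add_smul_support_ssubset hρ hd hd₀ hdρ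
  obtain ⟨b, hb, hρb, hsuppb⟩ := exists_nonneg_add_smul_support_ssubset hρ hd'
    (neg_ne_zero.mpr hd₀) (by rwa [support_neg])
  -- `f` restricted to the segment from `ρ - b • d` to `ρ + a • d` is convex, so it is
  -- maximal at an endpoint
  have hmax : f ρ ≤ max (f (ρ + b • -d)) (f (ρ + a • d)) := by
    simpa [smul_neg, ← neg_smul] using
      hf.le_max_of_mem_Icc (x := -b) (y := a) (z := 0) trivial trivial ⟨by linarith, ha⟩
  rcases le_max_iff.mp hmax with h | h
  · exact ⟨_, hρb, hsum_add _ _ hd', hsuppb, h⟩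
  · exact ⟨_, hρa, hsum_add _ _ hd, hsuppa, h⟩

theorem exists_support_ncard_le_of_convexOn {E : Type*} [AddCommGroup E] [Module ℝ E]
    [FiniteDimensional ℝ E] (L : (ι → ℝ) →ₗ[ℝ] E) (f : (ι → ℝ) → ℝ)
    (hf : ∀ ρ d, ∑ i, d i = 0 → L d = 0 → ConvexOn ℝ Set.univ fun t : ℝ => f (ρ + t • d))
    {ρ : ι → ℝ} (hρ : 0 ≤ ρ) :
    ∃ ρ' : ι → ℝ, 0 ≤ ρ' ∧ ∑ i, ρ' i = ∑ i, ρ i ∧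
      (support ρ').ncard ≤ Module.finrank ℝ E + 1 ∧ f ρ ≤ f ρ' := by
  induction hk : (support ρ).ncard using Nat.strong_induction_on generalizing ρ with
  | _ k ih =>
  by_cases hsmall : k ≤ Module.finrank ℝ E + 1
  · exact ⟨ρ, hρ, rfl, hk ▸ hsmall, le_rfl⟩
  obtain ⟨d, hd₀, hdρ, hLd⟩ := exists_ne_zero_support_subset_ker
    ((Fintype.linearCombination ℝ fun _ => (1 : ℝ)).prod L) (s := support ρ)
    (by rw [Module.finrank_prod, Module.finrank_self, hk]; omega)
  have hd : ∑ i, d i = 0 := by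
    simpa [Fintype.linearCombination_apply] using congrArg Prod.fst hLd
  obtain ⟨ρ₁, hρ₁, hsum₁, hsupp₁, hle₁⟩ :=
    exists_support_ssubset_le_of_convexOn hρ hd hd₀ hdρ (hf ρ d hd (congrArg Prod.snd hLd))
  obtain ⟨ρ', hρ', hsum', hcard', hle'⟩ := ih _ ((Set.ncard_lt_ncard hsupp₁).trans_eq hk) hρ₁ rfl
  exact ⟨ρ', hρ', hsum'.trans hsum₁, hcard', hle₁.trans hle'⟩

def moment (α : ι → ℝ) (k : ℕ) : (ι → ℝ) →ₗ[ℝ] ℝ := Fintype.linearCombination ℝ (α ^ k)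

theorem moment_apply (α : ι → ℝ) (k : ℕ) (ρ : ι → ℝ) :
    moment α k ρ = ∑ r, α r ^ k * ρ r := by
  simp [moment, Fintype.linearCombination_apply, mul_comm]

def pairForm (α ρ : ι → ℝ) : ℝ :=
  ∑ r, ∑ s, ((1 - α r) * α s + (1 - α s) * α r) ^ 2 * ρ r * ρ s

theorem pairForm_eq_moment (α ρ : ι → ℝ) :
    pairForm α ρ = 2 * moment α 0 ρ * moment α 2 ρ + 4 * moment α 2 ρ ^ 2
      + 2 * moment α 1 ρ ^ 2 - 8 * moment α 1 ρ * moment α 2 ρ := by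
  have expand : ∀ r s, ((1 - α r) * α s + (1 - α s) * α r) ^ 2 * ρ r * ρ s
      = (α r ^ 2 * ρ r) * ρ s + ρ r * (α s ^ 2 * ρ s) + 4 * (α r ^ 2 * ρ r) * (α s ^ 2 * ρ s)
        + 2 * (α r * ρ r) * (α s * ρ s) - 4 * (α r ^ 2 * ρ r) * (α s * ρ s)
        - 4 * (α r * ρ r) * (α s ^ 2 * ρ s) := by
    intro r s; ring
  simp only [pairForm, moment_apply, expand, sum_add_distrib, sum_sub_distrib, ← mul_sum,
    ← sum_mul, pow_zero, one_mul, pow_one]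
  ring

theorem convexOn_pairForm_add_smul (α ρ d : ι → ℝ) (hd₀ : moment α 0 d = 0)
    (hd₁ : moment α 1 d = 0) : ConvexOn ℝ Set.univ fun t : ℝ => pairForm α (ρ + t • d) := by
  have key : (fun t : ℝ => pairForm α (ρ + t • d)) = fun t => pairForm α ρ
      + (2 * moment α 0 ρ + 8 * moment α 2 ρ - 8 * moment α 1 ρ) * moment α 2 d * t
      + 4 * moment α 2 d ^ 2 * t ^ 2 := by
    ext t
    simp only [pairForm_eq_moment, map_add, map_smul, smul_eq_mul, hd₀, hd₁]
    ring
  rw [key]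
  exact convexOn_univ_quadratic _ _ (by positivity)

end

theorem stmt_2_general (n : ℕ) (α : Fin n → ℝ)
    (F : (Fin n → ℝ) → ℝ)
    (hF : ∀ ρ : Fin n → ℝ,
      F ρ = ∑ r, ∑ s, ((1 - α r) * α s + (1 - α s) * α r) ^ 2 * ρ r * ρ s)
    (ρ : Fin n → ℝ) (hρ : ∀ r, 0 ≤ ρ r) (hsum : ∑ r, ρ r = 1) :
    ∃ ρ' : Fin n → ℝ, (∀ r, 0 ≤ ρ' r) ∧ (∑ r, ρ' r = 1) ∧
      (∃ i j : Fin n, ∀ r, r ≠ i → r ≠ j → ρ' r = 0) ∧ F ρ ≤ F ρ' := by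
  obtain ⟨ρ', hρ', hsum', hcard, hle⟩ := exists_support_ncard_le_of_convexOn (moment α 1)
    (pairForm α) (fun ρ d hd hd₁ => convexOn_pairForm_add_smul α ρ d (by simpa [moment_apply]) hd₁)
    (ρ := ρ) hρ
  rw [Module.finrank_self] at hcard
  have hne : (support ρ').Nonempty := support_nonempty_iff.mpr fun h => by simp [h, hsum] at hsum'
  obtain ⟨i, j, hij⟩ := (Set.toFinite _).exists_subset_pair_of_ncard_le_two hne hcard
  refine ⟨ρ', hρ', hsum'.trans hsum, ⟨i, j, fun r hri hrj => ?_⟩, by rw [hF, hF]; exact hle⟩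
  by_contra h
  simpa [hri, hrj] using hij h

/-- The quadratic form `F` is maximized over probability vectors by
a probability vector supported on at most two indices. -/
theorem stmt_2 (n : ℕ) (hn : 0 < n) (α : Fin n → ℝ)
    (hα : ∀ r, α r ∈ Set.Icc (0 : ℝ) 1)
    (F : (Fin n → ℝ) → ℝ)
    (hF : ∀ ρ : Fin n → ℝ,
      F ρ = ∑ r, ∑ s, ((1 - α r) * α s + (1 - α s) * α r) ^ 2 * ρ r * ρ s)
    (ρ : Fin n → ℝ) (hρ : ∀ r, 0 ≤ ρ r) (hsum : ∑ r, ρ r = 1) :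
    ∃ ρ' : Fin n → ℝ, (∀ r, 0 ≤ ρ' r) ∧ (∑ r, ρ' r = 1) ∧
      (∃ i j : Fin n, ∀ r, r ≠ i → r ≠ j → ρ' r = 0) ∧ F ρ ≤ F ρ' :=
  stmt_2_general n α F hF ρ hρ hsum
end

section
/- Fix κ ∈ (0,1]. Define g(x,y) = ((1−x)y + (1−y)x)² and G(p,x,y) = p² g(x,x) + 2p(1−p) g(x,y) + (1−p)² g(y,y). Then for every p ∈ [0,1] and every x, y with κ ≥ x ≥ y ≥ 0, there exists q ∈ [0,1] such that G(p,x,y) ≤ G(q,κ,0). -/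
/-!
Put `z = 1 - 2x`, so that `g(x,y) = (1 - z_x z_y)² / 4`. Then
`4 G(p,x,y) = E(1 - Z Z')² = 1 - 2 (E Z)² + (E Z²)²` for independent copies `Z, Z'` of the law
`p δ_{1-2x} + (1-p) δ_{1-2y}`, which lives on `[c, 1]` with `c = 1 - 2κ`. On `[c, 1]` the
inequality `(Z - c)(1 - Z) ≥ 0` gives `E Z² ≤ (1 + c) E Z - c`, with equality for laws supported
on `{c, 1}`. Replacing the law by the one on `{c, 1}` with the same mean
(`q = (p x + (1-p) y) / κ`) keeps `(E Z)²` and can only increase `(E Z²)²`.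
-/

open Set

/-- `E (1 - Z Z')²` for independent copies `Z, Z'` of the law `p δ_a + (1-p) δ_b`. -/
def twoPointEnergy (p a b : ℝ) : ℝ :=
  p ^ 2 * (1 - a * a) ^ 2 + 2 * p * (1 - p) * (1 - a * b) ^ 2 + (1 - p) ^ 2 * (1 - b * b) ^ 2

theorem twoPointEnergy_eq_moments (p a b : ℝ) :
    twoPointEnergy p a b =
      1 - 2 * (p * a + (1 - p) * b) ^ 2 + (p * a ^ 2 + (1 - p) * b ^ 2) ^ 2 := by
  unfold twoPointEnergy
  ring

theorem twoPoint_secondMoment_le {c a b p : ℝ} (hp : p ∈ Icc (0 : ℝ) 1)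
    (ha : a ∈ Icc c 1) (hb : b ∈ Icc c 1) :
    p * a ^ 2 + (1 - p) * b ^ 2 ≤ (1 + c) * (p * a + (1 - p) * b) - c := by
  obtain ⟨hp0, hp1⟩ := hp
  have hA : 0 ≤ (a - c) * (1 - a) := mul_nonneg (by linarith [ha.1]) (by linarith [ha.2])
  have hB : 0 ≤ (b - c) * (1 - b) := mul_nonneg (by linarith [hb.1]) (by linarith [hb.2])
  nlinarith [mul_nonneg hp0 hA, mul_nonneg (sub_nonneg.2 hp1) hB]

theorem exists_twoPointEnergy_le {c a b p : ℝ} (hc : c < 1) (hp : p ∈ Icc (0 : ℝ) 1)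
    (ha : a ∈ Icc c 1) (hb : b ∈ Icc c 1) :
    ∃ q ∈ Icc (0 : ℝ) 1, twoPointEnergy p a b ≤ twoPointEnergy q c 1 := by
  set μ := p * a + (1 - p) * b
  have hμc : c ≤ μ := by nlinarith [hp.1, hp.2, ha.1, hb.1]
  have hμ1 : μ ≤ 1 := by nlinarith [hp.1, hp.2, ha.2, hb.2]
  have hc' : 0 < 1 - c := sub_pos.2 hc
  refine ⟨(1 - μ) / (1 - c), ⟨by bound, (div_le_one hc').2 (by linarith)⟩, ?_⟩
  set q := (1 - μ) / (1 - c)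
  have hq : q * c + (1 - q) * 1 = μ := by simp only [q]; field_simp; ring
  have hq₂ : q * c ^ 2 + (1 - q) * 1 ^ 2 = (1 + c) * μ - c := by
    rw [← hq]; ring
  have hsecond : p * a ^ 2 + (1 - p) * b ^ 2 ≤ (1 + c) * μ - c :=
    twoPoint_secondMoment_le hp ha hb
  have hsecond₀ : 0 ≤ p * a ^ 2 + (1 - p) * b ^ 2 :=
    add_nonneg (mul_nonneg hp.1 (sq_nonneg a)) (mul_nonneg (sub_nonneg.2 hp.2) (sq_nonneg b))
  rw [twoPointEnergy_eq_moments, twoPointEnergy_eq_moments, hq, hq₂]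
  gcongr

/-- The maximum of `G` on `[0,1] × {(x,y) : κ ≥ x ≥ y ≥ 0}` is attained
on the corner `(x,y) = (κ,0)` for a suitable probability `q`. -/
theorem stmt_3 (κ : ℝ) (hκ : κ ∈ Set.Ioc (0 : ℝ) 1)
    (g : ℝ → ℝ → ℝ) (hg : ∀ x y, g x y = ((1 - x) * y + (1 - y) * x) ^ 2)
    (G : ℝ → ℝ → ℝ → ℝ)
    (hG : ∀ p x y, G p x y =
      p ^ 2 * g x x + 2 * p * (1 - p) * g x y + (1 - p) ^ 2 * g y y)
    (p x y : ℝ) (hp : p ∈ Set.Icc (0 : ℝ) 1)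
    (hxκ : x ≤ κ) (hyx : y ≤ x) (hy : 0 ≤ y) :
    ∃ q ∈ Set.Icc (0 : ℝ) 1, G p x y ≤ G q κ 0 := by
  have hG_energy : ∀ p x y, G p x y = twoPointEnergy p (1 - 2 * x) (1 - 2 * y) / 4 := by
    intro p x y
    rw [hG, hg, hg, hg, twoPointEnergy]
    ring
  obtain ⟨q, hq, hle⟩ := exists_twoPointEnergy_le (c := 1 - 2 * κ) (by linarith [hκ.1]) hp
    (a := 1 - 2 * x) ⟨by linarith, by linarith⟩ (b := 1 - 2 * y) ⟨by linarith, by linarith⟩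
  refine ⟨q, hq, ?_⟩
  rw [hG_energy, hG_energy, mul_zero, sub_zero]
  linarith
end

section
/- Let A_1, …, A_m be positive semidefinite d×d complex matrices with Σ_{j=1}^m A_j = I and rank(A_j) ≤ l for every j, and set k_j = ‖A_j‖ (operator norm). Then l · Σ_{j=1}^m k_j ≥ d, and equality holds if and only if for every j there is an orthogonal projection P_j of rank l with A_j = k_j P_j. -/
open Matrix
open scoped ComplexOrder

/-- The operator norm of a complex square matrix (induced by the Euclidean norm). -/
noncomputable def opNorm {n : Type*} [Fintype n] [DecidableEq n] (M : Matrix n n ℂ) : ℝ :=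
  ‖Matrix.toEuclideanCLM (𝕜 := ℂ) M‖

/-!
Each `A j` is Hermitian with at most `l` nonzero eigenvalues, all bounded by `k j = ‖A j‖`, so
`Re tr (A j) ≤ l * k j`; summing over `j` gives `d = tr 1 ≤ l * ∑ k j`. Equality forces equality
for every `j`: if `k j ≠ 0`, `A j` has exactly `l` nonzero eigenvalues, all equal to `k j`, so
`A j * A j = k j • A j` and `(k j)⁻¹ • A j` is a rank-`l` orthogonal projection. Conversely
`tr P = rank P` for an idempotent `P`, so `tr (A j) = l * k j` and the traces sum to `d`.
-/

open Finset

variable {n : Type*} [Fintype n] [DecidableEq n]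

lemma opNorm_nonneg (M : Matrix n n ℂ) : 0 ≤ opNorm M :=
  norm_nonneg _

lemma opNorm_eq_zero {M : Matrix n n ℂ} : opNorm M = 0 ↔ M = 0 := by
  simp [opNorm]

namespace Matrix

lemma trace_eq_rank_of_isIdempotentElem {K : Type*} [Field K] {P : Matrix n n K}
    (hP : IsIdempotentElem P) : P.trace = P.rank := by
  have hP' : IsIdempotentElem (toLin' P) := hP.map toLinAlgEquiv'
  rw [← trace_toLin'_eq, (LinearMap.IsIdempotentElem.isProj_range _ hP').trace, rank,
    toLin'_apply']

namespace IsHermitian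

variable {M : Matrix n n ℂ}

lemma eigenvalues_le_opNorm (hM : M.IsHermitian) (i : n) : hM.eigenvalues i ≤ opNorm M := by
  have : Nonempty n := ⟨i⟩
  have hmem : (hM.eigenvalues i : ℂ) ∈ spectrum ℂ (toEuclideanCLM (𝕜 := ℂ) M) := by
    rw [AlgEquiv.spectrum_eq]
    exact spectrum.algebraMap_mem ℂ (hM.eigenvalues_mem_spectrum_real i)
  have h := spectrum.norm_le_norm_of_mem hmem
  rw [Complex.norm_real, Real.norm_eq_abs] at h
  exact (le_abs_self _).trans h

lemma rank_eq_card_filter_eigenvalues_ne_zero (hM : M.IsHermitian) :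
    M.rank = #{i | hM.eigenvalues i ≠ 0} := by
  rw [hM.rank_eq_card_non_zero_eigs, Fintype.card_subtype]

lemma re_trace_eq_sum_filter_eigenvalues_ne_zero (hM : M.IsHermitian) :
    M.trace.re = ∑ i ∈ {i | hM.eigenvalues i ≠ 0}, hM.eigenvalues i := by
  simp [hM.trace_eq_sum_eigenvalues, sum_filter_ne_zero]

lemma re_trace_le_rank_mul_opNorm (hM : M.IsHermitian) : M.trace.re ≤ M.rank * opNorm M := by
  rw [hM.re_trace_eq_sum_filter_eigenvalues_ne_zero, hM.rank_eq_card_filter_eigenvalues_ne_zero,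
    ← nsmul_eq_mul]
  exact sum_le_card_nsmul _ _ _ fun i _ => hM.eigenvalues_le_opNorm i

lemma eigenvalues_eq_zero_or_opNorm (hM : M.IsHermitian) (h : M.trace.re = M.rank * opNorm M)
    (i : n) :
    hM.eigenvalues i = 0 ∨ hM.eigenvalues i = opNorm M := by
  by_contra! hi
  have hlt : ∑ j ∈ {j | hM.eigenvalues j ≠ 0}, hM.eigenvalues j
      < ∑ _j ∈ {j | hM.eigenvalues j ≠ 0}, opNorm M :=
    sum_lt_sum (fun j _ => hM.eigenvalues_le_opNorm j)
      ⟨i, by simp [hi.1], (hM.eigenvalues_le_opNorm i).lt_of_ne hi.2⟩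
  rw [← hM.re_trace_eq_sum_filter_eigenvalues_ne_zero, sum_const, nsmul_eq_mul,
    ← hM.rank_eq_card_filter_eigenvalues_ne_zero] at hlt
  exact hlt.ne h

lemma mul_self_eq_smul (hM : M.IsHermitian) {c : ℝ}
    (h : ∀ i, hM.eigenvalues i = 0 ∨ hM.eigenvalues i = c) :
    M * M = (c : ℂ) • M := by
  rw [hM.spectral_theorem, ← map_mul, ← map_smul, diagonal_mul_diagonal, ← diagonal_smul]
  congr 2
  ext i
  rcases h i with hi | hi <;> simp [hi]

lemma exists_eq_smul_of_mul_self_eq_smul (hM : M.IsHermitian) {c : ℝ} (hc : c ≠ 0)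
    (hMM : M * M = (c : ℂ) • M) :
    ∃ P : Matrix n n ℂ, Pᴴ = P ∧ P * P = P ∧ P.rank = M.rank ∧ M = (c : ℂ) • P := by
  have hc' : (c : ℂ) ≠ 0 := Complex.ofReal_ne_zero.mpr hc
  refine ⟨(c : ℂ)⁻¹ • M, ?_, ?_, ?_, ?_⟩
  · rw [conjTranspose_smul, hM.eq, star_inv₀, Complex.star_def, Complex.conj_ofReal]
  · rw [smul_mul_smul_comm, hMM, smul_smul, inv_mul_eq_div, div_mul_cancel₀ _ hc']
  · exact rank_smul_of_mem_nonZeroDivisors _ (mem_nonZeroDivisors_of_ne_zero (inv_ne_zero hc'))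
  · rw [smul_smul, mul_inv_cancel₀ hc', one_smul]

lemma exists_eq_opNorm_smul_of_re_trace_eq (hM : M.IsHermitian) {l : ℕ} (hrank : M.rank ≤ l)
    (hk : opNorm M ≠ 0) (htr : M.trace.re = l * opNorm M) :
    ∃ P : Matrix n n ℂ, Pᴴ = P ∧ P * P = P ∧ P.rank = l ∧ M = (opNorm M : ℂ) • P := by
  have hk_pos : 0 < opNorm M := (opNorm_nonneg M).lt_of_ne' hk
  have hrank_eq : M.rank = l := by
    refine le_antisymm hrank ?_
    have := htr ▸ hM.re_trace_le_rank_mul_opNorm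
    exact_mod_cast le_of_mul_le_mul_right this hk_pos
  obtain ⟨P, hPh, hPP, hPrank, hMP⟩ := hM.exists_eq_smul_of_mul_self_eq_smul hk
    (hM.mul_self_eq_smul (hM.eigenvalues_eq_zero_or_opNorm (by rw [htr, hrank_eq])))
  exact ⟨P, hPh, hPP, hPrank.trans hrank_eq, hMP⟩

end IsHermitian

end Matrix

/-- For a POVM `{A_j}` with all ranks at most `l` and `k_j = ‖A_j‖`,
one has `l * Σ k_j ≥ d`, with equality iff each `A_j` is `k_j` times a rank-`l`
orthogonal projection. -/
theorem stmt_5 (d l m : ℕ) (hd : 0 < d)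
    (A : Fin m → Matrix (Fin d) (Fin d) ℂ)
    (hpsd : ∀ j, (A j).PosSemidef)
    (hsum : ∑ j, A j = 1)
    (hrank : ∀ j, (A j).rank ≤ l) :
    (d : ℝ) ≤ (l : ℝ) * ∑ j, opNorm (A j) ∧
    ((l : ℝ) * ∑ j, opNorm (A j) = (d : ℝ) ↔
      ∀ j, ∃ P : Matrix (Fin d) (Fin d) ℂ, Pᴴ = P ∧ P * P = P ∧ P.rank = l ∧
        A j = (↑(opNorm (A j)) : ℂ) • P) := by
  have hherm j : (A j).IsHermitian := (hpsd j).isHermitian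
  have htr_le j : (A j).trace.re ≤ l * opNorm (A j) :=
    (hherm j).re_trace_le_rank_mul_opNorm.trans
      (mul_le_mul_of_nonneg_right (by exact_mod_cast hrank j) (opNorm_nonneg _))
  have htr_sum : ∑ j, (A j).trace = d := by
    rw [← trace_sum, hsum, trace_one, Fintype.card_fin]
  have htr_sum_re : ∑ j, (A j).trace.re = d := by
    rw [← Complex.re_sum, htr_sum, Complex.natCast_re]
  refine ⟨?_, fun heq j => ?_, fun hproj => ?_⟩
  · rw [← htr_sum_re, mul_sum]
    exact sum_le_sum fun j _ => htr_le j
  · have htr_eq : ∀ j, (A j).trace.re = l * opNorm (A j) := by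
      have := (sum_eq_sum_iff_of_le fun j _ => htr_le j).mp (by rw [htr_sum_re, ← mul_sum, heq])
      exact fun j => this j (mem_univ j)
    obtain ⟨j₀, -, hj₀⟩ := exists_ne_zero_of_sum_ne_zero
      (right_ne_zero_of_mul (heq.trans_ne (Nat.cast_pos.mpr hd).ne'))
    by_cases hk : opNorm (A j) = 0
    -- `A j = 0` is `0 • P` for any rank-`l` projection `P`, and `d > 0` provides one.
    · obtain ⟨P, hPh, hPP, hPrank, -⟩ :=
        (hherm j₀).exists_eq_opNorm_smul_of_re_trace_eq (hrank j₀) hj₀ (htr_eq j₀)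
      refine ⟨P, hPh, hPP, hPrank, ?_⟩
      rw [hk, Complex.ofReal_zero, zero_smul]
      exact opNorm_eq_zero.mp hk
    · exact (hherm j).exists_eq_opNorm_smul_of_re_trace_eq (hrank j) hk (htr_eq j)
  · have htr j : (A j).trace = opNorm (A j) * l := by
      obtain ⟨P, -, hPP, hPrank, hAP⟩ := hproj j
      nth_rewrite 1 [hAP]
      rw [trace_smul, trace_eq_rank_of_isIdempotentElem hPP, hPrank, smul_eq_mul]
    simp only [htr, ← sum_mul] at htr_sum
    rw [mul_comm]
    exact_mod_cast htr_sum
end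

section
/- Let m ≥ 2, and let P_1, …, P_m be orthogonal projections of rank l on ℂ^d (l ≤ d) such that (d/(ml)) Σ_{j=1}^m P_j = I. Then for every index i, max_{j ≠ i} ‖P_i P_j P_i‖ ≥ (lm − d)/(d(m−1)). -/
open Matrix

/-!
Compressing `∑ j, P j = (m l / d) • 1` by the idempotent `P i` gives
`∑ j ≠ i, P i * P j * P i = (m l / d - 1) • P i`. A nonzero idempotent has norm at least `1`,
so by the triangle inequality the `m - 1` numbers `‖P i * P j * P i‖`, `j ≠ i`, sum to at least
`m l / d - 1`, and one of them is at least `(m l / d - 1) / (m - 1)`.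
-/

open Finset

theorem IsIdempotentElem.one_le_norm {A : Type*} [NormedRing A] {p : A}
    (hp : IsIdempotentElem p) (hp₀ : p ≠ 0) : 1 ≤ ‖p‖ := by
  have hpos : 0 < ‖p‖ := norm_pos_iff.mpr hp₀
  have : ‖p‖ ≤ ‖p‖ * ‖p‖ := by
    conv_lhs => rw [← hp.eq]
    exact norm_mul_le p p
  nlinarith

section

variable {ι R A : Type*} [Fintype ι] [DecidableEq ι]

theorem sum_erase_mul_mul_eq_smul [CommRing R] [Ring A] [Algebra R A] {P : ι → A} {a : R}
    {i : ι} (hP : IsIdempotentElem (P i)) (hsum : ∑ j, P j = a • 1) :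
    ∑ j ∈ univ.erase i, P i * P j * P i = (a - 1) • P i := by
  have hconj : ∑ j, P i * P j * P i = a • P i := by
    rw [← sum_mul, ← mul_sum, hsum, mul_smul_one, smul_mul_assoc, hP.eq]
  rw [← add_sum_erase _ _ (mem_univ i), hP.eq, hP.eq] at hconj
  rw [sub_smul, one_smul, ← hconj, add_sub_cancel_left]

theorem sub_one_le_sum_erase_norm_mul_mul {𝕜 : Type*} [RCLike 𝕜] [NormedRing A]
    [NormedAlgebra 𝕜 A] {P : ι → A} {a : ℝ} {i : ι} (hP : IsIdempotentElem (P i))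
    (hP₀ : P i ≠ 0) (hsum : ∑ j, P j = (a : 𝕜) • 1) :
    a - 1 ≤ ∑ j ∈ univ.erase i, ‖P i * P j * P i‖ := by
  rcases le_or_gt a 1 with ha | ha
  · exact (sub_nonpos.mpr ha).trans (sum_nonneg fun _ _ ↦ norm_nonneg _)
  calc a - 1 ≤ (a - 1) * ‖P i‖ := le_mul_of_one_le_right (sub_pos.mpr ha).le (hP.one_le_norm hP₀)
    _ = ‖∑ j ∈ univ.erase i, P i * P j * P i‖ := by
      rw [sum_erase_mul_mul_eq_smul hP hsum, norm_smul,
        show (a : 𝕜) - 1 = ((a - 1 : ℝ) : 𝕜) by push_cast; rfl, RCLike.norm_ofReal,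
        abs_of_pos (sub_pos.mpr ha)]
    _ ≤ ∑ j ∈ univ.erase i, ‖P i * P j * P i‖ := norm_sum_le _ _

theorem exists_ne_div_le_norm_mul_mul {𝕜 : Type*} [RCLike 𝕜] [NormedRing A] [NormedAlgebra 𝕜 A]
    [Nontrivial ι] {P : ι → A} {a : ℝ} {i : ι} (hP : IsIdempotentElem (P i)) (hP₀ : P i ≠ 0)
    (hsum : ∑ j, P j = (a : 𝕜) • 1) :
    ∃ j ≠ i, (a - 1) / (Fintype.card ι - 1) ≤ ‖P i * P j * P i‖ := by
  obtain ⟨j₀, hj₀⟩ := exists_ne i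
  have hcard : (0 : ℝ) < Fintype.card ι - 1 := by
    have : (1 : ℝ) < Fintype.card ι := by exact_mod_cast Fintype.one_lt_card
    linarith
  obtain ⟨j, hj, hle⟩ := exists_le_of_sum_le ⟨j₀, mem_erase.mpr ⟨hj₀, mem_univ _⟩⟩
    (f := fun _ ↦ (a - 1) / (Fintype.card ι - 1)) (g := fun j ↦ ‖P i * P j * P i‖) <| by
      rw [sum_const, card_erase_of_mem (mem_univ i), card_univ, nsmul_eq_mul,
        Nat.cast_sub Fintype.card_pos, Nat.cast_one, mul_div_cancel₀ _ hcard.ne']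
      exact sub_one_le_sum_erase_norm_mul_mul hP hP₀ hsum
  exact ⟨j, ne_of_mem_erase hj, hle⟩

end

theorem pos_and_lt_of_sub_div_pos {x y d : ℝ} (hd : 0 ≤ d) (hy : 0 < y)
    (h : 0 < (x - d) / (d * y)) : 0 < d ∧ d < x := by
  rcases hd.eq_or_lt with rfl | hd
  · simp at h
  · exact ⟨hd, sub_pos.mp ((div_pos_iff_of_pos_right (by positivity)).mp h)⟩

theorem stmt_9_general (d l m : ℕ) (hm : 2 ≤ m)
    (P : Fin m → Matrix (Fin d) (Fin d) ℂ)
    (hproj : ∀ j, (P j)ᴴ = P j ∧ P j * P j = P j)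
    (hrank : ∀ j, (P j).rank = l)
    (hres : (↑((d : ℝ) / (m * l)) : ℂ) • ∑ j, P j = 1) :
    ∀ i : Fin m, ∃ j : Fin m, j ≠ i ∧
      ((l : ℝ) * m - d) / (d * ((m : ℝ) - 1)) ≤ opNorm (P i * P j * P i) := by
  intro i
  have : Nontrivial (Fin m) := Fin.nontrivial_iff_two_le.mpr hm
  set c : ℝ := ((l : ℝ) * m - d) / (d * ((m : ℝ) - 1)) with hc_def
  rcases le_or_gt c 0 with hc | hc
  · obtain ⟨j, hj⟩ := exists_ne i
    exact ⟨j, hj, hc.trans (norm_nonneg _)⟩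
  have hm₁ : (0 : ℝ) < m - 1 := by
    have : (2 : ℝ) ≤ m := mod_cast hm
    linarith
  obtain ⟨hd, hdlm⟩ := pos_and_lt_of_sub_div_pos (Nat.cast_nonneg d) hm₁ hc
  have hl : (0 : ℝ) < l := by nlinarith
  let f := Matrix.toEuclideanCLM (𝕜 := ℂ) (n := Fin d)
  have hsum : ∑ j, f (P j) = (((d / (m * l))⁻¹ : ℝ) : ℂ) • 1 := by
    have hcoef : ((d / (m * l) : ℝ) : ℂ) ≠ 0 :=
      Complex.ofReal_ne_zero.mpr (div_pos hd (mul_pos (by linarith) hl)).ne'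
    rw [Complex.ofReal_inv, eq_inv_smul_iff₀ hcoef, ← map_sum, ← map_smul, hres, map_one]
  have hP₀ : f (P i) ≠ 0 := fun h ↦ (Nat.cast_pos.mp hl).ne' <| by
    rw [← hrank i, f.injective (h.trans (map_zero f).symm), rank_zero]
  obtain ⟨j, hj, hle⟩ := exists_ne_div_le_norm_mul_mul (P := fun j ↦ f (P j))
    (a := (d / (m * l))⁻¹) (IsIdempotentElem.map (hproj i).2 f) hP₀ hsum
  refine ⟨j, hj, le_of_eq_of_le ?_ (by simpa only [opNorm, map_mul] using hle)⟩
  rw [Fintype.card_fin, hc_def]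
  field_simp

/-- For a uniformly weighted resolution of the identity by rank-`l`
projections on `ℂ^d`, for every `i` the maximum of `‖P_i P_j P_i‖` over `j ≠ i` is at
least `(lm − d)/(d(m−1))`. -/
theorem stmt_9 (d l m : ℕ) (hm : 2 ≤ m) (hld : l ≤ d)
    (P : Fin m → Matrix (Fin d) (Fin d) ℂ)
    (hproj : ∀ j, (P j)ᴴ = P j ∧ P j * P j = P j)
    (hrank : ∀ j, (P j).rank = l)
    (hres : (↑((d : ℝ) / (m * l)) : ℂ) • ∑ j, P j = 1) :
    ∀ i : Fin m, ∃ j : Fin m, j ≠ i ∧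
      ((l : ℝ) * m - d) / (d * ((m : ℝ) - 1)) ≤ opNorm (P i * P j * P i) :=
  stmt_9_general d l m hm P hproj hrank hres
end

section
/- Let P and Q be orthogonal projections on ℂ^d, not both zero. Then the operator norm satisfies ‖P + Q‖ = 1 + ‖PQ‖. -/
open Matrix

/-!
For orthogonal projections `p`, `q` the operators `p + q` and `q * p * q = (p * q)⋆ (p * q)` are
positive, so in finite dimension their norms are eigenvalues. If `(p + q) x = λ x` with `p x ≠ 0`,
then `p q p (p x) = (λ - 1)² p x`, and `‖p q p‖ = ‖p q‖²` gives `λ ≤ 1 + ‖p q‖`. Conversely, if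
`q p q y = ‖p q‖² y` with `y ≠ 0`, then `q y = y` and `w = p y + ‖p q‖ y` is an eigenvector of
`p + q` for `1 + ‖p q‖`. When `p q = 0` one has `(p + q) p = p` and `(p + q) q = q` instead.
-/

open Module.End

section CStarRing

variable {A : Type*}

lemma IsStarProjection.star_mul_mul_self [Semigroup A] [StarMul A] {p q : A}
    (hp : IsStarProjection p) (hq : IsStarProjection q) :
    star (p * q) * (p * q) = q * p * q := by
  rw [star_mul, hp.isSelfAdjoint.star_eq, hq.isSelfAdjoint.star_eq, mul_assoc, ← mul_assoc p,
    hp.isIdempotentElem.eq, mul_assoc]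

variable [NormedRing A] [StarRing A] [CStarRing A] {p q : A}

lemma IsStarProjection.norm_mul_comm (hp : IsStarProjection p) (hq : IsStarProjection q) :
    ‖q * p‖ = ‖p * q‖ := by
  rw [← norm_star (p * q), star_mul, hp.isSelfAdjoint.star_eq, hq.isSelfAdjoint.star_eq]

lemma IsStarProjection.norm_mul_mul_self (hp : IsStarProjection p) (hq : IsStarProjection q) :
    ‖q * p * q‖ = ‖p * q‖ ^ 2 := by
  rw [← hp.star_mul_mul_self hq, CStarRing.norm_star_mul_self, sq]

lemma IsStarProjection.one_le_norm_add_of_mul_eq_zero (hp : IsStarProjection p)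
    (hq : IsStarProjection q) (hne : p ≠ 0 ∨ q ≠ 0) (hpq : p * q = 0) : 1 ≤ ‖p + q‖ := by
  have hqp : q * p = 0 := by
    rw [← norm_eq_zero, hp.norm_mul_comm hq, hpq, norm_zero]
  have one_le_of_mul_eq_self : ∀ r : A, r ≠ 0 → (p + q) * r = r → 1 ≤ ‖p + q‖ := by
    intro r hr h
    have : ‖r‖ ≤ ‖p + q‖ * ‖r‖ := by simpa only [h] using norm_mul_le (p + q) r
    nlinarith [norm_pos_iff.mpr hr]
  rcases hne with hp0 | hq0
  · exact one_le_of_mul_eq_self p hp0 (by rw [add_mul, hp.isIdempotentElem.eq, hqp, add_zero])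
  · exact one_le_of_mul_eq_self q hq0 (by rw [add_mul, hq.isIdempotentElem.eq, hpq, zero_add])

end CStarRing

lemma IsIdempotentElem.apply_apply {F α : Type*} [FunLike F α α] [Mul F] [IsMulApplyEqComp F α]
    {p : F} (hp : IsIdempotentElem p) (x : α) : p (p x) = p x := by
  rw [← mul_apply_eq_comp, hp.eq]

lemma ContinuousLinearMap.norm_le_of_apply_eq_smul {𝕜 F : Type*} [NontriviallyNormedField 𝕜]
    [NormedAddCommGroup F] [NormedSpace 𝕜 F] {T : F →L[𝕜] F} {c : 𝕜} {x : F} (hx : x ≠ 0)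
    (h : T x = c • x) : ‖c‖ ≤ ‖T‖ := by
  have := T.le_opNorm x
  rw [h, norm_smul] at this
  exact le_of_mul_le_mul_right this (norm_pos_iff.mpr hx)

section Operator

variable {E : Type*} [NormedAddCommGroup E] [InnerProductSpace ℂ E] [FiniteDimensional ℂ E]

lemma ContinuousLinearMap.exists_apply_eq_norm_smul_of_nonneg [Nontrivial E] {T : E →L[ℂ] E}
    (hT : 0 ≤ T) : ∃ x, x ≠ 0 ∧ T x = (‖T‖ : ℂ) • x := by
  have hmem : ((‖T‖ : ℝ) : ℂ) ∈ spectrum ℂ (T : Module.End ℂ E) := by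
    have := CStarAlgebra.norm_mem_spectrum_of_nonneg hT
    rwa [← spectrum.preimage_algebraMap ℂ, ContinuousLinearMap.spectrum_eq] at this
  obtain ⟨x, hx⟩ := (HasEigenvalue.of_mem_spectrum hmem).exists_hasEigenvector
  exact ⟨x, hx.2, mem_eigenspace_iff.mp hx.1⟩

variable {p q : E →L[ℂ] E}

lemma IsStarProjection.norm_add_le_one_add_norm_mul [Nontrivial E] (hp : IsStarProjection p)
    (hq : IsStarProjection q) : ‖p + q‖ ≤ 1 + ‖p * q‖ := by
  obtain ⟨x, hx0, hx⟩ :=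
    ContinuousLinearMap.exists_apply_eq_norm_smul_of_nonneg (add_nonneg hp.nonneg hq.nonneg)
  set l := ‖p + q‖
  have hsum : p x + q x = (l : ℂ) • x := hx
  by_cases hpx : p x = 0
  · have hqx : q x = (l : ℂ) • x := by rwa [hpx, zero_add] at hsum
    have := ContinuousLinearMap.norm_le_of_apply_eq_smul hx0 hqx
    rw [Complex.norm_real, Real.norm_of_nonneg (norm_nonneg _)] at this
    linarith [hq.norm_le, norm_nonneg (p * q)]
  · have hpqx : p (q x) = ((l : ℂ) - 1) • p x := by
      rw [eq_sub_of_add_eq' hsum, map_sub, map_smul, hp.isIdempotentElem.apply_apply, sub_smul,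
        one_smul]
    have hqpx : q (p x) = ((l : ℂ) - 1) • q x := by
      rw [eq_sub_of_add_eq hsum, map_sub, map_smul, hq.isIdempotentElem.apply_apply, sub_smul,
        one_smul]
    have hpqp : (p * q * p) (p x) = ((l : ℂ) - 1) ^ 2 • p x := by
      rw [mul_apply_eq_comp, mul_apply_eq_comp, hp.isIdempotentElem.apply_apply, hqpx,
        map_smul, hpqx, smul_smul, sq]
    have := ContinuousLinearMap.norm_le_of_apply_eq_smul hpx hpqp
    rw [hq.norm_mul_mul_self hp, hp.norm_mul_comm hq, norm_pow, ← Complex.ofReal_one,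
      ← Complex.ofReal_sub, Complex.norm_real, Real.norm_eq_abs, sq_abs] at this
    nlinarith [norm_nonneg (p * q)]

lemma IsStarProjection.one_add_norm_mul_le_norm_add [Nontrivial E] (hp : IsStarProjection p)
    (hq : IsStarProjection q) (hne : p ≠ 0 ∨ q ≠ 0) : 1 + ‖p * q‖ ≤ ‖p + q‖ := by
  rcases (norm_nonneg (p * q)).eq_or_lt with ha | ha
  · rw [← ha, add_zero]
    exact hp.one_le_norm_add_of_mul_eq_zero hq hne (norm_eq_zero.mp ha.symm)
  set a := ‖p * q‖
  obtain ⟨y, hy0, hy⟩ := ContinuousLinearMap.exists_apply_eq_norm_smul_of_nonneg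
    (hp.star_mul_mul_self hq ▸ star_mul_self_nonneg (p * q))
  rw [hp.norm_mul_mul_self hq, mul_apply_eq_comp, mul_apply_eq_comp] at hy
  have hqy : q y = y := by
    have h := hq.isIdempotentElem.apply_apply (p (q y))
    rw [hy, map_smul] at h
    exact smul_right_injective E (Complex.ofReal_ne_zero.mpr (by positivity)) h
  rw [hqy] at hy
  set w := p y + (a : ℂ) • y
  have hw : (p + q) w = ((1 + a : ℝ) : ℂ) • w := by
    simp only [w, _root_.add_apply, map_add, map_smul, hp.isIdempotentElem.apply_apply,
      hy, hqy]
    push_cast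
    module
  have hw0 : w ≠ 0 := by
    intro h0
    have hpy : (1 + (a : ℂ)) • p y = 0 := by
      rw [add_smul, one_smul]
      simpa only [w, map_add, map_smul, hp.isIdempotentElem.apply_apply, map_zero]
        using congrArg p h0
    rw [smul_eq_zero, or_iff_right (by norm_cast; positivity)] at hpy
    simp only [w, hpy, zero_add, smul_eq_zero, Complex.ofReal_eq_zero] at h0
    exact h0.elim ha.ne' hy0
  have := ContinuousLinearMap.norm_le_of_apply_eq_smul hw0 hw
  rwa [Complex.norm_real, Real.norm_of_nonneg (by positivity)] at this

lemma IsStarProjection.norm_add_eq_one_add_norm_mul (hp : IsStarProjection p)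
    (hq : IsStarProjection q) (hne : p ≠ 0 ∨ q ≠ 0) : ‖p + q‖ = 1 + ‖p * q‖ := by
  have : Nontrivial E := by
    obtain ⟨r, hr⟩ : ∃ r : E →L[ℂ] E, r ≠ 0 := hne.elim (⟨p, ·⟩) (⟨q, ·⟩)
    obtain ⟨x, hx⟩ := DFunLike.ne_iff.mp hr
    exact nontrivial_of_ne _ _ hx
  exact le_antisymm (hp.norm_add_le_one_add_norm_mul hq) (hp.one_add_norm_mul_le_norm_add hq hne)

end Operator

/-- For orthogonal projections `P`, `Q` on `ℂ^d`, not both zero,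
`‖P + Q‖ = 1 + ‖PQ‖`. -/
theorem stmt_10 (d : ℕ) (P Q : Matrix (Fin d) (Fin d) ℂ)
    (hP : Pᴴ = P) (hP2 : P * P = P) (hQ : Qᴴ = Q) (hQ2 : Q * Q = Q)
    (hne : P ≠ 0 ∨ Q ≠ 0) :
    opNorm (P + Q) = 1 + opNorm (P * Q) := by
  let f := Matrix.toEuclideanCLM (𝕜 := ℂ) (n := Fin d)
  have hproj : ∀ M, Mᴴ = M → M * M = M → IsStarProjection (f M) :=
    fun M hM hM2 ↦ IsStarProjection.map ⟨hM2, hM⟩ f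
  have hne' : f P ≠ 0 ∨ f Q ≠ 0 := by simpa only [map_ne_zero_iff f f.injective] using hne
  unfold opNorm
  rw [map_add, map_mul]
  exact (hproj P hP hP2).norm_add_eq_one_add_norm_mul (hproj Q hQ hQ2) hne'
end

section
/- For every l ≥ 1 and m ≥ 2, there exist m orthogonal projections P_1, …, P_m on ℂ^{2l}, each of rank l, such that Σ_{j=1}^m P_j = (m/2)·I (i.e., {(2/m) P_j} is a uniformly weighted resolution of the identity with weight 2/m = d/(ml) for d = 2l), and such that for all i ≠ j, ‖P_i + P_j‖ ≤ 1 + cos(π/m) < 2; in particular, for i ≠ j the ranges of P_i and P_j intersect only in the zero vector. -/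
open Matrix

namespace S15

/-! ### Real quadratic form estimates -/

lemma quad2 (c1 s1 c2 s2 g p q : ℝ) (h1 : c1^2 + s1^2 = 1) (h2 : c2^2 + s2^2 = 1)
    (hG : |c1*c2 + s1*s2| ≤ g) :
    (c1*p + s1*q)^2 + (c2*p + s2*q)^2 ≤ (1+g) * (p^2+q^2) := by
  have hg0 : 0 ≤ g := le_trans (abs_nonneg _) hG
  have hG1 : (c1*c2 + s1*s2) ≤ g := le_trans (le_abs_self _) hG
  have hG2 : -(c1*c2 + s1*s2) ≤ g := le_trans (neg_le_abs _) hG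
  nlinarith [sq_nonneg ((c1*p+s1*q) - (c2*p+s2*q)), sq_nonneg ((c1*p+s1*q) + (c2*p+s2*q)),
    sq_nonneg (s1*p - c1*q), sq_nonneg (s2*p - c2*q),
    sq_nonneg ((s1*p - c1*q) - (s2*p - c2*q)), sq_nonneg ((s1*p - c1*q) + (s2*p - c2*q)),
    sq_nonneg p, sq_nonneg q]

lemma normbound2 (c1 s1 c2 s2 g p q : ℝ) (h1 : c1^2 + s1^2 = 1) (h2 : c2^2 + s2^2 = 1)
    (hG : |c1*c2 + s1*s2| ≤ g) :
    (c1*(c1*p+s1*q) + c2*(c2*p+s2*q))^2 + (s1*(c1*p+s1*q) + s2*(c2*p+s2*q))^2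
      ≤ (1+g)^2 * (p^2+q^2) := by
  have hg0 : 0 ≤ g := le_trans (abs_nonneg _) hG
  have hG1 : (c1*c2 + s1*s2) ≤ g := le_trans (le_abs_self _) hG
  have hG2 : -(c1*c2 + s1*s2) ≤ g := le_trans (neg_le_abs _) hG
  have key := quad2 c1 s1 c2 s2 g p q h1 h2 hG
  set X := c1*p+s1*q with hX
  set Y := c2*p+s2*q with hY
  have expand : (c1*X + c2*Y)^2 + (s1*X + s2*Y)^2
      = X^2 + Y^2 + 2*(c1*c2+s1*s2)*X*Y := by linear_combination X^2 * h1 + Y^2 * h2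
  have step1 : X^2 + Y^2 + 2*(c1*c2+s1*s2)*X*Y ≤ (1+g)*(X^2+Y^2) := by
    nlinarith [sq_nonneg (X - Y), sq_nonneg (X + Y)]
  have step2 : (1+g)*(X^2+Y^2) ≤ (1+g)*((1+g)*(p^2+q^2)) :=
    mul_le_mul_of_nonneg_left key (by linarith)
  calc (c1*X + c2*Y)^2 + (s1*X + s2*Y)^2 = X^2 + Y^2 + 2*(c1*c2+s1*s2)*X*Y := expand
    _ ≤ (1+g)*(X^2+Y^2) := step1
    _ ≤ (1+g)^2 * (p^2+q^2) := by nlinarith [step2]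

/-- The complexified two-dimensional estimate. -/
lemma keyC (c1 s1 c2 s2 g : ℝ) (h1 : c1^2 + s1^2 = 1) (h2 : c2^2 + s2^2 = 1)
    (hG : |c1*c2 + s1*s2| ≤ g) (x y : ℂ) :
    Complex.normSq ((↑(c1*c1+c2*c2) : ℂ) * x + (↑(c1*s1+c2*s2) : ℂ) * y)
      + Complex.normSq ((↑(c1*s1+c2*s2) : ℂ) * x + (↑(s1*s1+s2*s2) : ℂ) * y)
      ≤ (1+g)^2 * (Complex.normSq x + Complex.normSq y) := by
  have hre := normbound2 c1 s1 c2 s2 g x.re y.re h1 h2 hG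
  have him := normbound2 c1 s1 c2 s2 g x.im y.im h1 h2 hG
  simp only [Complex.normSq_apply, Complex.add_re, Complex.add_im, Complex.mul_re,
    Complex.mul_im, Complex.ofReal_re, Complex.ofReal_im]
  ring_nf
  ring_nf at hre him
  nlinarith [hre, him]

/-! ### Exponential sums -/

lemma sum_exp_eq_zero (m : ℕ) (hm : 2 ≤ m) :
    ∑ j ∈ Finset.range m, Complex.exp ((j : ℂ) * (2 * Real.pi * Complex.I / m)) = 0 := by
  have hm0 : (m : ℂ) ≠ 0 := Nat.cast_ne_zero.2 (by omega)
  set ζ : ℂ := Complex.exp (2 * Real.pi * Complex.I / m) with hζ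
  have hpow : ∀ j : ℕ, Complex.exp ((j : ℂ) * (2 * Real.pi * Complex.I / m)) = ζ ^ j := by
    intro j; rw [hζ, ← Complex.exp_nat_mul]
  have hζm : ζ ^ m = 1 := by
    rw [hζ, ← Complex.exp_nat_mul]
    have : (m : ℂ) * (2 * Real.pi * Complex.I / m) = 2 * Real.pi * Complex.I := by
      field_simp
    rw [this, Complex.exp_two_pi_mul_I]
  have hζ1 : ζ ≠ 1 := by
    intro h
    rw [hζ, Complex.exp_eq_one_iff] at h
    obtain ⟨n, hn⟩ := h
    have h2 : (2 * (Real.pi : ℂ) * Complex.I) ≠ 0 := by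
      simp [Real.pi_ne_zero, Complex.I_ne_zero, Complex.ofReal_ne_zero]
    rw [div_eq_iff hm0] at hn
    have h1 : (1 : ℂ) * (2 * Real.pi * Complex.I)
        = ((n * m : ℤ) : ℂ) * (2 * Real.pi * Complex.I) := by
      push_cast
      linear_combination hn
    have h3 : ((1 : ℤ) : ℂ) = ((n * m : ℤ) : ℂ) := by
      have := mul_right_cancel₀ h2 h1
      exact_mod_cast this
    have h4 : (1 : ℤ) = n * m := Int.cast_injective h3
    have hm2 : (2 : ℤ) ≤ (m : ℤ) := by exact_mod_cast hm
    rcases le_or_gt n 0 with hn0 | hn0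
    · nlinarith
    · have : 1 ≤ n := hn0
      nlinarith
  simp_rw [hpow]
  rw [geom_sum_eq hζ1, hζm, sub_self, zero_div]

lemma arg_eq (m j : ℕ) (hm : 2 ≤ m) : (j : ℂ) * (2 * Real.pi * Complex.I / m)
    = ((2 * Real.pi * j / m : ℝ) : ℂ) * Complex.I := by
  have hm0 : (m : ℂ) ≠ 0 := Nat.cast_ne_zero.2 (by omega)
  push_cast
  field_simp

lemma sum_cos_eq_zero (m : ℕ) (hm : 2 ≤ m) :
    ∑ j ∈ Finset.range m, Real.cos (2 * Real.pi * j / m) = 0 := by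
  have h := sum_exp_eq_zero m hm
  have h2 : (∑ j ∈ Finset.range m,
      Complex.exp ((j : ℂ) * (2 * Real.pi * Complex.I / m))).re = 0 := by rw [h]; rfl
  rw [Complex.re_sum] at h2
  simpa only [arg_eq m _ hm, Complex.exp_ofReal_mul_I_re] using h2

lemma sum_sin_eq_zero (m : ℕ) (hm : 2 ≤ m) :
    ∑ j ∈ Finset.range m, Real.sin (2 * Real.pi * j / m) = 0 := by
  have h := sum_exp_eq_zero m hm
  have h2 : (∑ j ∈ Finset.range m,
      Complex.exp ((j : ℂ) * (2 * Real.pi * Complex.I / m))).im = 0 := by rw [h]; rfl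
  rw [Complex.im_sum] at h2
  simpa only [arg_eq m _ hm, Complex.exp_ofReal_mul_I_im] using h2

noncomputable def θ (m j : ℕ) : ℝ := Real.pi * j / m

lemma sum_cos_sq (m : ℕ) (hm : 2 ≤ m) :
    ∑ j ∈ Finset.range m, Real.cos (θ m j) * Real.cos (θ m j) = (m : ℝ) / 2 := by
  have h : ∀ j ∈ Finset.range m, Real.cos (θ m j) * Real.cos (θ m j)
      = 1/2 + Real.cos (2 * Real.pi * j / m) / 2 := by
    intro j _
    have := Real.cos_sq (θ m j)
    rw [← pow_two]
    rw [this]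
    congr 2
    unfold θ; ring
  have h2 : ∑ j ∈ Finset.range m, Real.cos (2 * Real.pi * j / m) / 2 = 0 := by
    rw [← Finset.sum_div, sum_cos_eq_zero m hm, zero_div]
  rw [Finset.sum_congr rfl h, Finset.sum_add_distrib, h2, add_zero, Finset.sum_const,
    Finset.card_range, nsmul_eq_mul]
  ring

lemma sum_sin_sq (m : ℕ) (hm : 2 ≤ m) :
    ∑ j ∈ Finset.range m, Real.sin (θ m j) * Real.sin (θ m j) = (m : ℝ) / 2 := by
  have h : ∀ j ∈ Finset.range m, Real.sin (θ m j) * Real.sin (θ m j)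
      = 1 - Real.cos (θ m j) * Real.cos (θ m j) := by
    intro j _
    have := Real.sin_sq_add_cos_sq (θ m j)
    nlinarith [this]
  rw [Finset.sum_congr rfl h, Finset.sum_sub_distrib, sum_cos_sq m hm, Finset.sum_const,
    Finset.card_range, nsmul_eq_mul]
  ring

lemma sum_cos_sin (m : ℕ) (hm : 2 ≤ m) :
    ∑ j ∈ Finset.range m, Real.cos (θ m j) * Real.sin (θ m j) = 0 := by
  have h : ∀ j ∈ Finset.range m, Real.cos (θ m j) * Real.sin (θ m j)
      = Real.sin (2 * Real.pi * j / m) / 2 := by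
    intro j _
    have harg : (2 : ℝ) * Real.pi * j / m = 2 * θ m j := by unfold θ; ring
    rw [harg, Real.sin_two_mul]
    ring
  rw [Finset.sum_congr rfl h, ← Finset.sum_div, sum_sin_eq_zero m hm, zero_div]

noncomputable def uR (m j : ℕ) : Fin 2 → ℝ := ![Real.cos (θ m j), Real.sin (θ m j)]

@[simp] lemma uR_zero (m j : ℕ) : uR m j 0 = Real.cos (θ m j) := rfl
@[simp] lemma uR_one (m j : ℕ) : uR m j 1 = Real.sin (θ m j) := rfl

lemma uR_norm (m j : ℕ) : uR m j 0 * uR m j 0 + uR m j 1 * uR m j 1 = 1 := by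
  simp only [uR_zero, uR_one, ← pow_two]
  exact Real.cos_sq_add_sin_sq _

noncomputable def Q (m j : ℕ) : Matrix (Fin 2) (Fin 2) ℂ :=
  Matrix.of fun a b => ((uR m j a * uR m j b : ℝ) : ℂ)

lemma Q_apply (m j : ℕ) (a b : Fin 2) : Q m j a b = ((uR m j a * uR m j b : ℝ) : ℂ) := rfl

lemma Q_herm (m j : ℕ) : (Q m j)ᴴ = Q m j := by
  ext a b
  rw [conjTranspose_apply, Q_apply, Q_apply, Complex.star_def, Complex.conj_ofReal, mul_comm]

lemma Q_idem (m j : ℕ) : Q m j * Q m j = Q m j := by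
  have h := uR_norm m j
  ext a b
  rw [Matrix.mul_apply, Fin.sum_univ_two, Q_apply, Q_apply, Q_apply, Q_apply, Q_apply]
  push_cast
  norm_cast
  linear_combination (uR m j a * uR m j b) * h

lemma Q_trace (m j : ℕ) : (Q m j).trace = 1 := by
  have h := uR_norm m j
  rw [Matrix.trace, Fin.sum_univ_two]
  show Q m j 0 0 + Q m j 1 1 = 1
  rw [Q_apply, Q_apply]
  norm_cast

lemma Q_sum (m : ℕ) (hm : 2 ≤ m) : ∑ j : Fin m, Q m j = ((m : ℂ) / 2) • 1 := by
  ext a b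
  rw [Matrix.sum_apply]
  fin_cases a <;> fin_cases b <;>
    simp only [Q_apply, Fin.mk_zero, Fin.mk_one, uR_zero, uR_one, Fin.isValue,
      Matrix.smul_apply, Matrix.one_apply, if_true, if_false, smul_eq_mul]
  · rw [Fin.sum_univ_eq_sum_range (fun j => ((Real.cos (θ m j) * Real.cos (θ m j) : ℝ) : ℂ)),
      ← Complex.ofReal_sum, sum_cos_sq m hm]
    norm_num
  · rw [Fin.sum_univ_eq_sum_range (fun j => ((Real.cos (θ m j) * Real.sin (θ m j) : ℝ) : ℂ)),
      ← Complex.ofReal_sum, sum_cos_sin m hm]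
    norm_num
  · have hcomm : ∀ j ∈ Finset.range m, Real.sin (θ m j) * Real.cos (θ m j)
        = Real.cos (θ m j) * Real.sin (θ m j) := fun j _ => mul_comm _ _
    rw [Fin.sum_univ_eq_sum_range (fun j => ((Real.sin (θ m j) * Real.cos (θ m j) : ℝ) : ℂ)),
      ← Complex.ofReal_sum, Finset.sum_congr rfl hcomm, sum_cos_sin m hm]
    norm_num
  · rw [Fin.sum_univ_eq_sum_range (fun j => ((Real.sin (θ m j) * Real.sin (θ m j) : ℝ) : ℂ)),
      ← Complex.ofReal_sum, sum_sin_sq m hm]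
    norm_num

lemma trace_eq_rank_of_idem {n : Type*} [Fintype n] [DecidableEq n] (M : Matrix n n ℂ)
    (h : M * M = M) : M.trace = (M.rank : ℂ) := by
  classical
  have hf : M.mulVecLin ∘ₗ M.mulVecLin = M.mulVecLin := by
    rw [← Matrix.mulVecLin_mul, h]
  have hproj : LinearMap.IsProj (LinearMap.range M.mulVecLin) M.mulVecLin := by
    refine ⟨fun x => LinearMap.mem_range_self _ x, fun x hx => ?_⟩
    obtain ⟨y, hy⟩ := hx
    rw [← hy, ← LinearMap.comp_apply, hf]
  have htr := hproj.trace
  have h1 : LinearMap.trace ℂ (n → ℂ) M.mulVecLin = M.trace := by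
    rw [LinearMap.trace_eq_matrix_trace ℂ (Pi.basisFun ℂ n)]
    congr 1
    rw [LinearMap.toMatrix_eq_toMatrix']
    exact LinearMap.toMatrix'_toLin' M
  rw [Matrix.rank, ← htr, h1]

variable {l : ℕ}

noncomputable def e (l : ℕ) : Fin 2 × Fin l ≃ Fin (2 * l) := finProdFinEquiv

noncomputable def P (l : ℕ) (A : Matrix (Fin 2) (Fin 2) ℂ) : Matrix (Fin (2*l)) (Fin (2*l)) ℂ :=
  reindex (e l) (e l) (blockDiagonal fun _ : Fin l => A)

lemma P_herm (A : Matrix (Fin 2) (Fin 2) ℂ) (hA : Aᴴ = A) : (P l A)ᴴ = P l A := by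
  rw [P, conjTranspose_reindex, blockDiagonal_conjTranspose]
  simp [hA]

lemma P_mul (A B : Matrix (Fin 2) (Fin 2) ℂ) : P l A * P l B = P l (A * B) := by
  rw [P, P, P, reindex_apply, reindex_apply, reindex_apply, submatrix_mul_equiv,
    blockDiagonal_mul]

lemma P_trace (A : Matrix (Fin 2) (Fin 2) ℂ) : (P l A).trace = l * A.trace := by
  rw [P, reindex_apply]
  have h : ((blockDiagonal fun _ : Fin l => A).submatrix (e l).symm (e l).symm).trace
      = (blockDiagonal fun _ : Fin l => A).trace := by
    rw [Matrix.trace, Matrix.trace]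
    exact Fintype.sum_equiv (e l).symm _ _ (fun k => rfl)
  rw [h, trace_blockDiagonal]
  simp [Finset.sum_const, nsmul_eq_mul]

lemma P_sum {m : ℕ} (A : Fin m → Matrix (Fin 2) (Fin 2) ℂ) :
    ∑ j, P l (A j) = P l (∑ j, A j) := by
  ext k k'
  simp only [P, Matrix.sum_apply, reindex_apply, submatrix_apply, blockDiagonal_apply]
  split_ifs <;> simp [Matrix.sum_apply]

lemma P_add (A B : Matrix (Fin 2) (Fin 2) ℂ) : P l A + P l B = P l (A + B) := by
  have h := P_sum (l := l) ![A, B]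
  simpa [Fin.sum_univ_two] using h

lemma P_smul_one (c : ℂ) : P l (c • 1) = c • 1 := by
  rw [P, show (fun _ : Fin l => c • (1 : Matrix (Fin 2) (Fin 2) ℂ))
      = c • fun _ : Fin l => (1 : Matrix (Fin 2) (Fin 2) ℂ) from rfl,
    blockDiagonal_smul, show (fun _ : Fin l => (1 : Matrix (Fin 2) (Fin 2) ℂ))
      = (1 : Fin l → Matrix (Fin 2) (Fin 2) ℂ) from rfl,
    blockDiagonal_one]
  have h1 : reindex (e l) (e l) ((c • 1) : Matrix (Fin 2 × Fin l) (Fin 2 × Fin l) ℂ)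
      = c • reindex (e l) (e l) (1 : Matrix (Fin 2 × Fin l) (Fin 2 × Fin l) ℂ) :=
    map_smul (Matrix.reindexLinearEquiv ℂ ℂ (e l) (e l)) c 1
  rw [h1, reindex_apply, submatrix_one_equiv]

lemma bd_mulVec (D : Fin l → Matrix (Fin 2) (Fin 2) ℂ) (w : Fin 2 × Fin l → ℂ) (i : Fin 2)
    (q : Fin l) : (blockDiagonal D *ᵥ w) (i, q) = (D q *ᵥ fun i' => w (i', q)) i := by
  simp only [mulVec, dotProduct, Fintype.sum_prod_type, blockDiagonal_apply]
  rw [Finset.sum_comm]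
  rw [Finset.sum_eq_single q]
  · simp
  · intro p _ hp
    simp [Ne.symm hp]
  · simp

lemma P_mulVec_bound (A : Matrix (Fin 2) (Fin 2) ℂ) (C : ℝ)
    (hA : ∀ w : Fin 2 → ℂ, Complex.normSq ((A *ᵥ w) 0) + Complex.normSq ((A *ᵥ w) 1)
      ≤ C * (Complex.normSq (w 0) + Complex.normSq (w 1)))
    (v : Fin (2*l) → ℂ) :
    ∑ k, Complex.normSq ((P l A *ᵥ v) k) ≤ C * ∑ k, Complex.normSq (v k) := by
  set w : Fin 2 × Fin l → ℂ := v ∘ (e l) with hw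
  have hmv : P l A *ᵥ v = (blockDiagonal (fun _ : Fin l => A) *ᵥ w) ∘ (e l).symm := by
    rw [P, reindex_apply]
    exact submatrix_mulVec_equiv _ _ _ _
  have hv : ∑ k, Complex.normSq (v k) = ∑ p, Complex.normSq (w p) :=
    (Equiv.sum_comp (e l) fun k => Complex.normSq (v k)).symm
  rw [hmv, hv]
  have hstep1 : ∑ k, Complex.normSq (((blockDiagonal (fun _ : Fin l => A) *ᵥ w) ∘ (e l).symm) k)
      = ∑ p, Complex.normSq ((blockDiagonal (fun _ : Fin l => A) *ᵥ w) p) :=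
    Equiv.sum_comp (e l).symm fun p => Complex.normSq ((blockDiagonal (fun _ : Fin l => A) *ᵥ w) p)
  rw [hstep1, Fintype.sum_prod_type, Finset.sum_comm]
  have hstep2 : ∀ q : Fin l, ∑ i : Fin 2,
      Complex.normSq ((blockDiagonal (fun _ : Fin l => A) *ᵥ w) (i, q))
        ≤ C * (Complex.normSq (w (0, q)) + Complex.normSq (w (1, q))) := by
    intro q
    rw [Fin.sum_univ_two, bd_mulVec, bd_mulVec]
    exact hA (fun i' => w (i', q))
  calc ∑ q : Fin l, ∑ i : Fin 2,
        Complex.normSq ((blockDiagonal (fun _ : Fin l => A) *ᵥ w) (i, q))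
      ≤ ∑ q : Fin l, C * (Complex.normSq (w (0, q)) + Complex.normSq (w (1, q))) :=
        Finset.sum_le_sum fun q _ => hstep2 q
    _ = C * ∑ p, Complex.normSq (w p) := by
        rw [← Finset.mul_sum]
        congr 1
        rw [Fintype.sum_prod_type, Fin.sum_univ_two, ← Finset.sum_add_distrib]

lemma opNorm_le_of_sq {n : Type*} [Fintype n] [DecidableEq n] (M : Matrix n n ℂ) (C : ℝ)
    (hC : 0 ≤ C)
    (h : ∀ v : n → ℂ, ∑ k, Complex.normSq ((M *ᵥ v) k) ≤ C^2 * ∑ k, Complex.normSq (v k)) :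
    opNorm M ≤ C := by
  rw [opNorm]
  apply ContinuousLinearMap.opNorm_le_bound _ hC
  intro x
  have happ : ∀ i, (Matrix.toEuclideanCLM (𝕜 := ℂ) M x) i = (M *ᵥ (fun j => x j)) i := by
    intro i
    exact congrFun (Matrix.ofLp_toEuclideanCLM (𝕜 := ℂ) M x) i
  rw [EuclideanSpace.norm_eq, EuclideanSpace.norm_eq]
  have hsum : ∑ i, ‖(Matrix.toEuclideanCLM (𝕜 := ℂ) M x) i‖^2
      = ∑ i, Complex.normSq ((M *ᵥ (fun j => x j)) i) := by
    apply Finset.sum_congr rfl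
    intro i _
    rw [happ i, Complex.sq_norm]
  have hsum2 : ∑ i, ‖x i‖^2 = ∑ i, Complex.normSq (x i) := by
    apply Finset.sum_congr rfl
    intro i _
    rw [Complex.sq_norm]
  rw [hsum, hsum2]
  have hrhs : C * Real.sqrt (∑ i, Complex.normSq (x i))
      = Real.sqrt (C^2 * ∑ i, Complex.normSq (x i)) := by
    rw [Real.sqrt_mul (sq_nonneg C), Real.sqrt_sq hC]
  rw [hrhs]
  exact Real.sqrt_le_sqrt (h (fun j => x j))


lemma cos_pos_lemma (m : ℕ) (hm : 2 ≤ m) :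
    0 ≤ Real.cos (Real.pi / m) ∧ Real.cos (Real.pi / m) < 1 := by
  have hπ := Real.pi_pos
  have hm0 : (0:ℝ) < m := by positivity
  have hm2 : (2:ℝ) ≤ m := by exact_mod_cast hm
  have h1 : Real.pi / m ≤ Real.pi / 2 := by
    have h2 : (0:ℝ) < 2 := by norm_num
    exact div_le_div_of_nonneg_left hπ.le h2 hm2
  constructor
  · refine Real.cos_nonneg_of_mem_Icc ⟨le_trans (by linarith : -(Real.pi/2) ≤ 0) ?_, h1⟩
    positivity
  · have h0 : (0:ℝ) < Real.pi / m := by positivity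
    have := Real.cos_lt_cos_of_nonneg_of_le_pi (le_refl (0:ℝ)) (by linarith) h0
    simpa using this

lemma cos_bound (m : ℕ) (hm : 2 ≤ m) (i j : Fin m) (hij : i ≠ j) :
    |Real.cos (θ m i - θ m j)| ≤ Real.cos (Real.pi / m) := by
  have hπ := Real.pi_pos
  have hm0 : (0:ℝ) < m := by positivity
  set d : ℝ := |(i:ℝ) - (j:ℝ)| with hd
  have hd0 : 0 ≤ d := abs_nonneg _
  have hd1 : 1 ≤ d := by
    have hne : ((i : ℕ) : ℤ) ≠ ((j : ℕ) : ℤ) := by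
      intro h
      exact hij (Fin.ext (by exact_mod_cast h))
    have h1 : (1 : ℤ) ≤ |((i : ℕ) : ℤ) - ((j : ℕ) : ℤ)| :=
      Int.one_le_abs (sub_ne_zero.2 hne)
    have h2 : d = |(((i : ℕ) : ℤ) - ((j : ℕ) : ℤ) : ℤ)| := by
      rw [hd]
      push_cast
      rfl
    rw [h2]
    exact_mod_cast h1
  have hd2 : d ≤ (m : ℝ) - 1 := by
    have hi : ((i : ℕ) : ℝ) + 1 ≤ m := by exact_mod_cast i.isLt
    have hj : ((j : ℕ) : ℝ) + 1 ≤ m := by exact_mod_cast j.isLt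
    have hi0 : (0:ℝ) ≤ (i : ℕ) := Nat.cast_nonneg _
    have hj0 : (0:ℝ) ≤ (j : ℕ) := Nat.cast_nonneg _
    rw [hd, abs_le]
    constructor <;> linarith
  have harg : θ m i - θ m j = ((i:ℝ) - (j:ℝ)) * Real.pi / m := by
    unfold θ; ring
  rw [harg]
  have habs : Real.cos (((i:ℝ) - (j:ℝ)) * Real.pi / m) = Real.cos (d * Real.pi / m) := by
    rw [← Real.cos_abs (((i:ℝ) - (j:ℝ)) * Real.pi / m)]
    congr 1
    rw [abs_div, abs_mul, abs_of_pos hπ, abs_of_pos hm0, hd]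
  rw [habs]
  set x := d * Real.pi / m with hx
  have hx1 : Real.pi / m ≤ x := by
    rw [hx]
    exact (div_le_div_iff_of_pos_right hm0).mpr (by nlinarith : Real.pi ≤ d * Real.pi)
  have hx2 : x ≤ Real.pi - Real.pi / m := by
    rw [hx]
    have heq : Real.pi - Real.pi / m = ((m:ℝ) - 1) * Real.pi / m := by
      field_simp
    rw [heq]
    exact (div_le_div_iff_of_pos_right hm0).mpr (by nlinarith : d * Real.pi ≤ ((m:ℝ)-1) * Real.pi)
  have hx0 : 0 ≤ x := by positivity
  have hxπ : x ≤ Real.pi := by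
    have : 0 < Real.pi / m := by positivity
    linarith
  rw [abs_le]
  constructor
  · have h := Real.cos_le_cos_of_nonneg_of_le_pi hx0 (by
      have : 0 < Real.pi / m := by positivity
      linarith) hx2
    rw [Real.cos_pi_sub] at h
    linarith
  · exact Real.cos_le_cos_of_nonneg_of_le_pi (by positivity) hxπ hx1

lemma Q_pair_bound (m i j : ℕ) (g : ℝ)
    (hG : |Real.cos (θ m i - θ m j)| ≤ g) (w : Fin 2 → ℂ) :
    Complex.normSq (((Q m i + Q m j) *ᵥ w) 0) + Complex.normSq (((Q m i + Q m j) *ᵥ w) 1)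
      ≤ (1+g)^2 * (Complex.normSq (w 0) + Complex.normSq (w 1)) := by
  set c1 := Real.cos (θ m i) with hc1
  set s1 := Real.sin (θ m i) with hs1
  set c2 := Real.cos (θ m j) with hc2
  set s2 := Real.sin (θ m j) with hs2
  have h1 : c1^2 + s1^2 = 1 := Real.cos_sq_add_sin_sq _
  have h2 : c2^2 + s2^2 = 1 := Real.cos_sq_add_sin_sq _
  have hG' : |c1*c2 + s1*s2| ≤ g := by
    rw [hc1, hs1, hc2, hs2, ← Real.cos_sub]
    exact hG
  have e0 : ((Q m i + Q m j) *ᵥ w) 0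
      = (↑(c1*c1+c2*c2) : ℂ) * w 0 + (↑(c1*s1+c2*s2) : ℂ) * w 1 := by
    simp only [mulVec, dotProduct, Fin.sum_univ_two, Matrix.add_apply, Q_apply,
      uR_zero, uR_one, ← hc1, ← hs1, ← hc2, ← hs2]
    push_cast
    ring
  have e1 : ((Q m i + Q m j) *ᵥ w) 1
      = (↑(c1*s1+c2*s2) : ℂ) * w 0 + (↑(s1*s1+s2*s2) : ℂ) * w 1 := by
    simp only [mulVec, dotProduct, Fin.sum_univ_two, Matrix.add_apply, Q_apply,
      uR_zero, uR_one, ← hc1, ← hs1, ← hc2, ← hs2]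
    push_cast
    ring
  rw [e0, e1]
  exact keyC c1 s1 c2 s2 g h1 h2 hG' (w 0) (w 1)


end S15

/-- For every `l ≥ 1` and `m ≥ 2` there exist `m` rank-`l` orthogonal
projections on `ℂ^{2l}` summing to `(m/2)·I`, such that for `i ≠ j` one has
`‖P_i + P_j‖ ≤ 1 + cos(π/m) < 2`; in particular the ranges of distinct projections
intersect only in the zero vector. -/
theorem stmt_15 (l m : ℕ) (hl : 1 ≤ l) (hm : 2 ≤ m) :
    ∃ P : Fin m → Matrix (Fin (2 * l)) (Fin (2 * l)) ℂ,
      (∀ j, (P j)ᴴ = P j ∧ P j * P j = P j ∧ (P j).rank = l) ∧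
      (∑ j, P j = ((m : ℂ) / 2) • 1) ∧
      (∀ i j : Fin m, i ≠ j →
        opNorm (P i + P j) ≤ 1 + Real.cos (Real.pi / m) ∧
        1 + Real.cos (Real.pi / m) < 2 ∧
        (∀ v : Fin (2 * l) → ℂ, P i *ᵥ v = v → P j *ᵥ v = v → v = 0)) := by
  obtain ⟨hg0, hg1⟩ := S15.cos_pos_lemma m hm
  set g := Real.cos (Real.pi / m) with hg
  refine ⟨fun j => S15.P l (S15.Q m j), ?_, ?_, ?_⟩
  · intro j
    have hidem : S15.P l (S15.Q m j) * S15.P l (S15.Q m j) = S15.P l (S15.Q m j) := by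
      rw [S15.P_mul, S15.Q_idem]
    refine ⟨S15.P_herm _ (S15.Q_herm m j), hidem, ?_⟩
    have htr := S15.trace_eq_rank_of_idem _ hidem
    rw [S15.P_trace, S15.Q_trace, mul_one] at htr
    exact_mod_cast htr.symm
  · rw [S15.P_sum, S15.Q_sum m hm, S15.P_smul_one]
  · intro i j hij
    have hGij : |Real.cos (S15.θ m i - S15.θ m j)| ≤ g := S15.cos_bound m hm i j hij
    have hA := fun w => S15.Q_pair_bound m i j g hGij w
    have hfull : ∀ v : Fin (2*l) → ℂ,
        ∑ k, Complex.normSq (((S15.P l (S15.Q m i) + S15.P l (S15.Q m j)) *ᵥ v) k)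
          ≤ (1+g)^2 * ∑ k, Complex.normSq (v k) := by
      intro v
      rw [S15.P_add]
      exact S15.P_mulVec_bound _ ((1+g)^2) hA v
    refine ⟨?_, by linarith, ?_⟩
    · exact S15.opNorm_le_of_sq _ (1+g) (by linarith) hfull
    · intro v h1 h2
      have h3 : (S15.P l (S15.Q m i) + S15.P l (S15.Q m j)) *ᵥ v = fun k => 2 * v k := by
        rw [Matrix.add_mulVec, h1, h2]
        funext k
        simp
        ring
      have h4 := hfull v
      rw [h3] at h4
      have h5 : ∑ k, Complex.normSq (2 * v k) = 4 * ∑ k, Complex.normSq (v k) := by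
        rw [Finset.mul_sum]
        apply Finset.sum_congr rfl
        intro k _
        rw [Complex.normSq_mul]
        norm_num [Complex.normSq_apply]
      rw [h5] at h4
      have hSnn : (0:ℝ) ≤ ∑ k, Complex.normSq (v k) :=
        Finset.sum_nonneg fun k _ => Complex.normSq_nonneg _
      have hlt : (1+g)^2 < 4 := by nlinarith
      have hS : ∑ k, Complex.normSq (v k) ≤ 0 := by nlinarith
      have h6 : ∀ k ∈ Finset.univ, (0:ℝ) ≤ Complex.normSq (v k) :=
        fun k _ => Complex.normSq_nonneg _
      have h7 : ∑ k, Complex.normSq (v k) = 0 := le_antisymm hS hSnn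
      funext k
      have h8 := (Finset.sum_eq_zero_iff_of_nonneg h6).1 h7 k (Finset.mem_univ k)
      simpa using Complex.normSq_eq_zero.1 h8
end

section
/- Let q ≥ 1, m ≥ 2, and let f_1, …, f_m ∈ ℂ^q satisfy Σ_{j=1}^m f_j f_j* = I_q (a Parseval frame) and ‖f_j‖² = q/m for every j. Then max_{i ≠ j} |⟨f_i, f_j⟩|² ≥ q(m−q)/(m²(m−1)), and equality holds if and only if |⟨f_i, f_j⟩| = √(q(m−q)/(m²(m−1))) for all i ≠ j. -/
/-!
The frame potential `∑ i, ∑ j, |⟨f i, f j⟩|²` is `tr (S²)` for the frame operator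
`S = ∑ j, f j (f j)*`, hence equals `q` for a Parseval frame. Removing the `m` diagonal terms
`(q / m)²` leaves `q (m - q) / m` spread over the `m (m - 1)` off-diagonal pairs, so their average
is exactly the Welch constant: some pair attains at least the average, and no pair exceeds it
only if every pair equals it.
-/

open Matrix Finset

namespace Finset

variable {α M : Type*}

theorem sum_offDiag_eq_sum_sum_sub_sum_diag [DecidableEq α] [AddCommGroup M] (s : Finset α)
    (g : α × α → M) :
    ∑ p ∈ s.offDiag, g p = ∑ i ∈ s, ∑ j ∈ s, g (i, j) - ∑ i ∈ s, g (i, i) := by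
  rw [← sum_product, ← diag_union_offDiag, sum_union (disjoint_diag_offDiag s), sum_diag]
  abel

theorem exists_le_and_forall_le_iff_forall_eq_of_sum_eq_card_nsmul [AddCommMonoid M]
    [LinearOrder M] [IsOrderedCancelAddMonoid M] {s : Finset α} (hs : s.Nonempty)
    {g : α → M} {c : M} (h : ∑ p ∈ s, g p = #s • c) :
    (∃ p ∈ s, c ≤ g p) ∧ ((∀ p ∈ s, g p ≤ c) ↔ ∀ p ∈ s, g p = c) := by
  rw [← sum_const] at h
  exact ⟨exists_le_of_sum_le hs h.ge, fun hle => (sum_eq_sum_iff_of_le hle).mp h,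
    fun heq p hp => (heq p hp).le⟩

end Finset

variable {𝕜 ι n : Type*} [RCLike 𝕜]

theorem Matrix.sum_vecMulVec_self_star [Fintype ι] (f : ι → n → 𝕜) :
    ∑ j, vecMulVec (f j) (star (f j)) = (of f)ᵀ * (of f)ᵀᴴ := by
  ext k l
  simp [sum_apply, vecMulVec_apply, mul_apply]

theorem Matrix.conjTranspose_mul_self_transpose_of [Fintype n] (f : ι → n → 𝕜) :
    (of f)ᵀᴴ * (of f)ᵀ = of fun i j => star (f i) ⬝ᵥ f j := by
  ext i j
  simp [mul_apply, dotProduct]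

theorem sum_sum_norm_star_dotProduct_sq [Fintype ι] [Fintype n] (f : ι → n → 𝕜) :
    ((∑ i, ∑ j, ‖star (f i) ⬝ᵥ f j‖ ^ 2 : ℝ) : 𝕜) =
      trace ((∑ j, vecMulVec (f j) (star (f j))) * ∑ j, vecMulVec (f j) (star (f j))) := by
  set B := (of f)ᵀ
  have hgram : trace (Bᴴ * B * (Bᴴ * B)) =
      ∑ i, ∑ j, (star (f i) ⬝ᵥ f j) * star (star (f i) ⬝ᵥ f j) := by
    simp only [B, conjTranspose_mul_self_transpose_of, trace, diag_apply, mul_apply, of_apply,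
      ← star_dotProduct]
  have hcyclic : trace (B * Bᴴ * (B * Bᴴ)) = trace (Bᴴ * B * (Bᴴ * B)) := by
    rw [Matrix.mul_assoc, trace_mul_comm]
    simp only [Matrix.mul_assoc]
  rw [sum_vecMulVec_self_star, hcyclic, hgram]
  push_cast
  simp only [RCLike.star_def, RCLike.mul_conj]

theorem sum_sum_norm_star_dotProduct_sq_of_parseval [Fintype ι] [Fintype n] [DecidableEq n]
    {f : ι → n → 𝕜} (hf : ∑ j, vecMulVec (f j) (star (f j)) = 1) :
    ∑ i, ∑ j, ‖star (f i) ⬝ᵥ f j‖ ^ 2 = Fintype.card n := by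
  have h := sum_sum_norm_star_dotProduct_sq f
  rw [hf, Matrix.mul_one, trace_one] at h
  exact_mod_cast h

theorem sum_offDiag_norm_star_dotProduct_sq_of_parseval [Fintype ι] [DecidableEq ι] [Fintype n]
    [DecidableEq n] {f : ι → n → 𝕜} (hf : ∑ j, vecMulVec (f j) (star (f j)) = 1) {a : ℝ}
    (ha : ∀ j, ‖star (f j) ⬝ᵥ f j‖ = a) :
    ∑ p ∈ univ.offDiag, ‖star (f p.1) ⬝ᵥ f p.2‖ ^ 2 =
      Fintype.card n - Fintype.card ι * a ^ 2 := by
  rw [sum_offDiag_eq_sum_sum_sub_sum_diag, sum_sum_norm_star_dotProduct_sq_of_parseval hf]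
  simp [ha]

/-- The maximum being `≥ c` is the first conjunct; the maximum being `= c` is expressed as all
pairs being `≤ c`. -/
theorem stmt_16_general (q m : ℕ) (hm : 2 ≤ m)
    (f : Fin m → Fin q → ℂ)
    (hParseval : ∑ j, Matrix.vecMulVec (f j) (star (f j)) = 1)
    (hnorm : ∀ j, star (f j) ⬝ᵥ f j = ((q : ℂ) / m)) :
    (∃ i j : Fin m, i ≠ j ∧
        (q : ℝ) * ((m : ℝ) - q) / ((m : ℝ) ^ 2 * ((m : ℝ) - 1)) ≤
          ‖star (f i) ⬝ᵥ f j‖ ^ 2) ∧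
    ((∀ i j : Fin m, i ≠ j →
        ‖star (f i) ⬝ᵥ f j‖ ^ 2 ≤
          (q : ℝ) * ((m : ℝ) - q) / ((m : ℝ) ^ 2 * ((m : ℝ) - 1))) ↔
      (∀ i j : Fin m, i ≠ j →
        ‖star (f i) ⬝ᵥ f j‖ =
          Real.sqrt ((q : ℝ) * ((m : ℝ) - q) / ((m : ℝ) ^ 2 * ((m : ℝ) - 1))))) := by
  set c : ℝ := (q : ℝ) * ((m : ℝ) - q) / ((m : ℝ) ^ 2 * ((m : ℝ) - 1))
  have hm1 : (m : ℝ) - 1 ≠ 0 := by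
    have : (2 : ℝ) ≤ m := by exact_mod_cast hm
    linarith
  have hcard : #(univ : Finset (Fin m)).offDiag = m * (m - 1) := by
    simp [offDiag_card, Nat.mul_sub_one]
  have hsum : ∑ p ∈ univ.offDiag, ‖star (f p.1) ⬝ᵥ f p.2‖ ^ 2 =
      #(univ : Finset (Fin m)).offDiag • c := by
    rw [sum_offDiag_norm_star_dotProduct_sq_of_parseval hParseval (a := q / m) (by simp [hnorm]),
      nsmul_eq_mul, hcard, Nat.cast_mul, Nat.cast_sub (by omega)]
    simp only [Fintype.card_fin, c]
    field_simp
    ring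
  have hne : (univ : Finset (Fin m)).offDiag.Nonempty :=
    ⟨(⟨0, by omega⟩, ⟨1, by omega⟩), by simp [Fin.ext_iff]⟩
  have hc : 0 ≤ c := by
    have hnonneg : 0 ≤ #(univ : Finset (Fin m)).offDiag • c :=
      hsum ▸ sum_nonneg fun _ _ => sq_nonneg _
    rw [nsmul_eq_mul] at hnonneg
    exact nonneg_of_mul_nonneg_right hnonneg (by exact_mod_cast hne.card_pos)
  obtain ⟨hexists, hle_iff⟩ :=
    exists_le_and_forall_le_iff_forall_eq_of_sum_eq_card_nsmul hne hsum
  simp only [mem_offDiag, mem_univ, true_and, Prod.forall, Prod.exists] at hexists hle_iff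
  refine ⟨hexists, hle_iff.trans (forall₂_congr fun i j => imp_congr_right fun _ => ?_)⟩
  rw [← Real.sqrt_inj (sq_nonneg _) hc, Real.sqrt_sq (norm_nonneg _)]

/-- Welch bound for an equal-norm Parseval frame `{f_j}` for `ℂ^q`:
the maximum over pairs `i ≠ j` of `|⟨f_i, f_j⟩|²` is at least `q(m−q)/(m²(m−1))`, with
equality iff all the pairwise absolute inner products coincide with
`√(q(m−q)/(m²(m−1)))`.  (The maximum being `≥ c` is the first conjunct; the maximum
being `= c` is expressed as all pairs being `≤ c`.) -/
theorem stmt_16 (q m : ℕ) (hq : 1 ≤ q) (hm : 2 ≤ m)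
    (f : Fin m → Fin q → ℂ)
    (hParseval : ∑ j, Matrix.vecMulVec (f j) (star (f j)) = 1)
    (hnorm : ∀ j, star (f j) ⬝ᵥ f j = ((q : ℂ) / m)) :
    (∃ i j : Fin m, i ≠ j ∧
        (q : ℝ) * ((m : ℝ) - q) / ((m : ℝ) ^ 2 * ((m : ℝ) - 1)) ≤
          ‖star (f i) ⬝ᵥ f j‖ ^ 2) ∧
    ((∀ i j : Fin m, i ≠ j →
        ‖star (f i) ⬝ᵥ f j‖ ^ 2 ≤
          (q : ℝ) * ((m : ℝ) - q) / ((m : ℝ) ^ 2 * ((m : ℝ) - 1))) ↔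
      (∀ i j : Fin m, i ≠ j →
        ‖star (f i) ⬝ᵥ f j‖ =
          Real.sqrt ((q : ℝ) * ((m : ℝ) - q) / ((m : ℝ) ^ 2 * ((m : ℝ) - 1))))) :=
  stmt_16_general q m hm f hParseval hnorm
end
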